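/- arXiv:1501.04398 — 2 statements merged into one kernel-verified Lean document; each statement's English description precedes it below -/
import Mathlib

section
/- For vertices u, v of X the following are equivalent: (i) u and v are cospectral and there exists a polynomial p(x) with p(A) e_u = e_v; (ii) u and v are strongly cospectral. Moreover, if u and v are cospectral, then any polynomial p with p(A) e_u = e_v also satisfies p(A) e_v = e_u and p(θ_r) ∈ {+1, −1} for every θ_r ∈ Φ_u. -/
open Matrix Finset Polynomial

variable {V : Type*}

/-- The eccentricity of a vertex: maximum graph distance to any vertex. -/
noncomputable def ecc [Fintype V] (X : SimpleGraph V) (u : V) : ℕ :=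
  Finset.univ.sup fun w => X.dist u w

/-- The standard basis vector of a vertex. -/
def eVec [DecidableEq V] (u : V) : V → ℝ := Pi.single u 1

/-- `SpectralDecomp X d θ E` : `θ 0 > θ 1 > ... > θ d` are the distinct eigenvalues of the
adjacency matrix of `X` and `E r` is the orthogonal projection onto the `θ r`-eigenspace. -/
structure SpectralDecomp [Fintype V] [DecidableEq V] (X : SimpleGraph V) [DecidableRel X.Adj]
    (d : ℕ) (θ : Fin (d + 1) → ℝ) (E : Fin (d + 1) → Matrix V V ℝ) : Prop where
  decomp : X.adjMatrix ℝ = ∑ r, θ r • E r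
  sum_eq_one : ∑ r, E r = 1
  orth : ∀ r s, E r * E s = if r = s then E r else 0
  symm : ∀ r, (E r)ᵀ = E r
  strict_anti : ∀ r s : Fin (d + 1), r < s → θ s < θ r
  proj_ne_zero : ∀ r, E r ≠ 0

open scoped Classical in
/-- The (index set of the) eigenvalue support of a vertex `u`:
those `r` with `E r * e_u ≠ 0`. -/
noncomputable def suppIdx [Fintype V] [DecidableEq V] {d : ℕ}
    (E : Fin (d + 1) → Matrix V V ℝ) (u : V) : Finset (Fin (d + 1)) :=
  Finset.univ.filter fun r => E r *ᵥ eVec u ≠ 0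

/-- The dual degree `d*(u) = |Φ_u| - 1`. -/
noncomputable def dualDeg [Fintype V] [DecidableEq V] {d : ℕ}
    (E : Fin (d + 1) → Matrix V V ℝ) (u : V) : ℕ :=
  (suppIdx E u).card - 1

/-- A vertex is spectrally extremal if its eccentricity equals its dual degree. -/
noncomputable def SpectrallyExtremal [Fintype V] [DecidableEq V] (X : SimpleGraph V) {d : ℕ}
    (E : Fin (d + 1) → Matrix V V ℝ) (u : V) : Prop :=
  ecc X u = dualDeg E u

/-- Vertices are cospectral if the diagonal entries of all spectral projections agree. -/
def Cospectral [Fintype V] [DecidableEq V] {d : ℕ}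
    (E : Fin (d + 1) → Matrix V V ℝ) (u v : V) : Prop :=
  ∀ r, E r u u = E r v v

/-- Vertices are strongly cospectral if `E r e_u = ± E r e_v` for every `r`. -/
def StronglyCospectral [Fintype V] [DecidableEq V] {d : ℕ}
    (E : Fin (d + 1) → Matrix V V ℝ) (u v : V) : Prop :=
  ∀ r, E r *ᵥ eVec v = E r *ᵥ eVec u ∨ E r *ᵥ eVec v = -(E r *ᵥ eVec u)

/-- `u` and `v` are antipodal vertices: they are cospectral, the distance partition of `u`
coincides with that of `v`, it is pseudo equitable (with respect to a positive Perron
eigenvector), and `{u}`, `{v}` are singleton classes at maximum distance from each other. -/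
noncomputable def Antipodal [Fintype V] [DecidableEq V] (X : SimpleGraph V) [DecidableRel X.Adj]
    {d : ℕ} (θ : Fin (d + 1) → ℝ) (E : Fin (d + 1) → Matrix V V ℝ) (u v : V) : Prop :=
  Cospectral E u v ∧
  -- the two distance partitions have the same classes
  (∀ i : ℕ, i ≤ ecc X u → ∃ j : ℕ, ∀ w, X.dist u w = i ↔ X.dist v w = j) ∧
  (∀ j : ℕ, j ≤ ecc X v → ∃ i : ℕ, ∀ w, X.dist u w = i ↔ X.dist v w = j) ∧
  -- `{u}` and `{v}` are singletons at maximum distance from each other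
  X.dist u v = ecc X u ∧ X.dist u v = ecc X v ∧
  (∀ w, X.dist u w = X.dist u v → w = v) ∧
  (∀ w, X.dist v w = X.dist u v → w = u) ∧
  -- the partition is pseudo equitable with respect to a positive eigenvector
  -- for the largest eigenvalue `θ 0`
  ∃ x : V → ℝ, (∀ w, 0 < x w) ∧ X.adjMatrix ℝ *ᵥ x = θ 0 • x ∧
    ∀ i : ℕ, ∀ w₁ w₂ : V, X.dist u w₁ = X.dist u w₂ →
      ∑ c ∈ Finset.univ.filter (fun c => X.dist u c = i),
          (X.adjMatrix ℝ) w₁ c * x c / x w₁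
        = ∑ c ∈ Finset.univ.filter (fun c => X.dist u c = i),
          (X.adjMatrix ℝ) w₂ c * x c / x w₂

/-- Perfect state transfer from `u` to `v` at time `t`:
`|(exp (i t A))_{v,u}| = 1`. -/
noncomputable def PST [Fintype V] [DecidableEq V] (X : SimpleGraph V) [DecidableRel X.Adj]
    (u v : V) (t : ℝ) : Prop :=
  ‖(NormedSpace.exp ((Complex.I * (t : ℂ)) • X.adjMatrix ℂ)) v u‖ = 1

/-- `X` is distance-regular: there are intersection numbers `a i`, `b i`, `c i` such that
any vertex `w` at distance `i` from `u` has exactly `c i` neighbours at distance `i - 1`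
from `u`, `a i` neighbours at distance `i`, and `b i` neighbours at distance `i + 1`. -/
noncomputable def IsDistanceRegular [Fintype V] (X : SimpleGraph V) [DecidableRel X.Adj] :
    Prop :=
  ∃ a b c : ℕ → ℕ, ∀ (i : ℕ) (u w : V), X.dist u w = i →
    (Finset.univ.filter (fun z => X.Adj w z ∧ X.dist u z + 1 = i)).card = c i ∧
    (Finset.univ.filter (fun z => X.Adj w z ∧ X.dist u z = i)).card = a i ∧
    (Finset.univ.filter (fun z => X.Adj w z ∧ X.dist u z = i + 1)).card = b i

/-!
The spectral decomposition diagonalises every polynomial in `A`: `E_r p(A) = p(θ_r) E_r`. Hence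
`p(A) e_u = e_v` says exactly that `E_r e_v = p(θ_r) E_r e_u` for all `r`. Since
`(E_r)_{uu} = ‖E_r e_u‖²`, cospectrality then forces `p(θ_r)² = 1` whenever `E_r e_u ≠ 0`, which
gives strong cospectrality and `p(A) e_v = e_u`. Conversely, for strongly cospectral `u, v` the
Lagrange interpolant of the signs `E_r e_v = ± E_r e_u` at the distinct eigenvalues maps `e_u`
to `e_v`.
-/

namespace SpectralDecomp

variable [Fintype V] [DecidableEq V] {X : SimpleGraph V} [DecidableRel X.Adj]
  {d : ℕ} {θ : Fin (d + 1) → ℝ} {E : Fin (d + 1) → Matrix V V ℝ}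

lemma proj_mul_sum_smul (h : SpectralDecomp X d θ E) (c : Fin (d + 1) → ℝ) (s : Fin (d + 1)) :
    E s * ∑ r, c r • E r = c s • E s := by
  rw [Finset.mul_sum, Finset.sum_eq_single s]
  · rw [Matrix.mul_smul, h.orth, if_pos rfl]
  · intro r _ hr
    rw [Matrix.mul_smul, h.orth, if_neg (Ne.symm hr), smul_zero]
  · simp

lemma adjMatrix_pow (h : SpectralDecomp X d θ E) (n : ℕ) :
    X.adjMatrix ℝ ^ n = ∑ r, θ r ^ n • E r := by
  induction n with
  | zero => simp [h.sum_eq_one]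
  | succ n ih =>
    rw [pow_succ, ih, h.decomp, Finset.sum_mul]
    refine Finset.sum_congr rfl fun r _ => ?_
    rw [Matrix.smul_mul, h.proj_mul_sum_smul, smul_smul, ← pow_succ]

lemma aeval_adjMatrix (h : SpectralDecomp X d θ E) (p : Polynomial ℝ) :
    aeval (X.adjMatrix ℝ) p = ∑ r, p.eval (θ r) • E r := by
  simp_rw [aeval_eq_sum_range, h.adjMatrix_pow, Finset.smul_sum, smul_smul]
  rw [Finset.sum_comm]
  refine Finset.sum_congr rfl fun r _ => ?_
  rw [eval_eq_sum_range, Finset.sum_smul]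

lemma aeval_mulVec_eq_iff (h : SpectralDecomp X d θ E) (p : Polynomial ℝ) (x y : V → ℝ) :
    aeval (X.adjMatrix ℝ) p *ᵥ x = y ↔ ∀ r, p.eval (θ r) • (E r *ᵥ x) = E r *ᵥ y := by
  constructor
  · rintro rfl r
    rw [Matrix.mulVec_mulVec, h.aeval_adjMatrix, h.proj_mul_sum_smul, Matrix.smul_mulVec]
  · intro hxy
    simp_rw [h.aeval_adjMatrix, Matrix.sum_mulVec, Matrix.smul_mulVec, hxy,
      ← Matrix.sum_mulVec, h.sum_eq_one, Matrix.one_mulVec]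

lemma diag_eq_dotProduct (h : SpectralDecomp X d θ E) (r : Fin (d + 1)) (u : V) :
    E r u u = (E r *ᵥ eVec u) ⬝ᵥ (E r *ᵥ eVec u) := by
  have hproj : (E r)ᵀ * E r = E r := by rw [h.symm, h.orth, if_pos rfl]
  calc E r u u = ((E r)ᵀ * E r) u u := by rw [hproj]
    _ = _ := by simp [Matrix.mul_apply, dotProduct, eVec]

lemma diag_eq_zero_iff (h : SpectralDecomp X d θ E) (r : Fin (d + 1)) (u : V) :
    E r u u = 0 ↔ E r *ᵥ eVec u = 0 := by
  rw [h.diag_eq_dotProduct, dotProduct_self_eq_zero]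

lemma diag_eq_sq_mul_of_mulVec_eq_smul (h : SpectralDecomp X d θ E) {r : Fin (d + 1)} {u v : V}
    {c : ℝ} (huv : E r *ᵥ eVec v = c • (E r *ᵥ eVec u)) : E r v v = c ^ 2 * E r u u := by
  rw [h.diag_eq_dotProduct, h.diag_eq_dotProduct r u, huv, smul_dotProduct, dotProduct_smul,
    smul_eq_mul, smul_eq_mul, ← mul_assoc, sq]

section Transfer

variable {u v : V} {p : Polynomial ℝ}
  (hp : aeval (X.adjMatrix ℝ) p *ᵥ eVec u = eVec v)
include hp

lemma mulVec_eVec_eq_eval_smul (h : SpectralDecomp X d θ E) (r : Fin (d + 1)) :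
    E r *ᵥ eVec v = p.eval (θ r) • (E r *ᵥ eVec u) :=
  ((h.aeval_mulVec_eq_iff p _ _).mp hp r).symm

lemma eval_sq_smul_mulVec_eVec (h : SpectralDecomp X d θ E) (hco : Cospectral E u v)
    (r : Fin (d + 1)) : p.eval (θ r) ^ 2 • (E r *ᵥ eVec u) = E r *ᵥ eVec u := by
  by_cases hzero : E r *ᵥ eVec u = 0
  · rw [hzero, smul_zero]
  have hdiag : E r u u ≠ 0 := mt (h.diag_eq_zero_iff r u).mp hzero
  have hsq : p.eval (θ r) ^ 2 * E r u u = 1 * E r u u := by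
    rw [← h.diag_eq_sq_mul_of_mulVec_eq_smul (h.mulVec_eVec_eq_eval_smul hp r), ← hco r, one_mul]
  rw [mul_right_cancel₀ hdiag hsq, one_smul]

lemma eval_eq_one_or_neg_one (h : SpectralDecomp X d θ E) (hco : Cospectral E u v)
    {r : Fin (d + 1)} (hr : r ∈ suppIdx E u) : p.eval (θ r) = 1 ∨ p.eval (θ r) = -1 := by
  rw [suppIdx, Finset.mem_filter] at hr
  rw [← sq_eq_one_iff]
  exact smul_left_injective ℝ hr.2
    ((h.eval_sq_smul_mulVec_eVec hp hco r).trans (one_smul ℝ _).symm)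

lemma aeval_mulVec_eVec_symm (h : SpectralDecomp X d θ E) (hco : Cospectral E u v) :
    aeval (X.adjMatrix ℝ) p *ᵥ eVec v = eVec u := by
  refine (h.aeval_mulVec_eq_iff p _ _).mpr fun r => ?_
  rw [h.mulVec_eVec_eq_eval_smul hp r, smul_smul, ← sq, h.eval_sq_smul_mulVec_eVec hp hco r]

lemma stronglyCospectral_of_aeval (h : SpectralDecomp X d θ E) (hco : Cospectral E u v) :
    StronglyCospectral E u v := by
  intro r
  by_cases hr : r ∈ suppIdx E u
  · rw [h.mulVec_eVec_eq_eval_smul hp r]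
    rcases h.eval_eq_one_or_neg_one hp hco hr with hc | hc
    · exact .inl (by rw [hc, one_smul])
    · exact .inr (by rw [hc, neg_one_smul])
  · simp only [suppIdx, Finset.mem_filter, Finset.mem_univ, true_and, not_not] at hr
    exact .inl (by rw [h.mulVec_eVec_eq_eval_smul hp r, hr, smul_zero])

end Transfer

lemma cospectral_of_stronglyCospectral (h : SpectralDecomp X d θ E) {u v : V}
    (hsc : StronglyCospectral E u v) : Cospectral E u v := by
  intro r
  rcases hsc r with hc | hc
  · rw [h.diag_eq_sq_mul_of_mulVec_eq_smul (c := 1) (by rw [hc, one_smul]), one_pow, one_mul]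
  · rw [h.diag_eq_sq_mul_of_mulVec_eq_smul (c := -1) (by rw [hc, neg_one_smul, neg_neg]),
      neg_one_sq, one_mul]

lemma exists_aeval_mulVec_eVec_of_stronglyCospectral (h : SpectralDecomp X d θ E) {u v : V}
    (hsc : StronglyCospectral E u v) :
    ∃ p : Polynomial ℝ, aeval (X.adjMatrix ℝ) p *ᵥ eVec u = eVec v := by
  classical
  let sign r : ℝ := if E r *ᵥ eVec v = E r *ᵥ eVec u then 1 else -1
  have hinj : Set.InjOn θ (Finset.univ : Finset (Fin (d + 1))) :=
    (StrictAnti.injective h.strict_anti).injOn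
  refine ⟨Lagrange.interpolate Finset.univ θ sign, (h.aeval_mulVec_eq_iff _ _ _).mpr fun r => ?_⟩
  rw [Lagrange.eval_interpolate_at_node sign hinj (Finset.mem_univ r)]
  by_cases hpos : E r *ᵥ eVec v = E r *ᵥ eVec u
  · rw [show sign r = 1 from if_pos hpos, one_smul, hpos]
  · rw [show sign r = -1 from if_neg hpos, (hsc r).resolve_left hpos, neg_one_smul]

end SpectralDecomp

variable [Fintype V] [DecidableEq V]

theorem stmt_5_general (X : SimpleGraph V) [DecidableRel X.Adj]
    {d : ℕ} (θ : Fin (d + 1) → ℝ) (E : Fin (d + 1) → Matrix V V ℝ)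
    (hspec : SpectralDecomp X d θ E) (u v : V) :
    ((Cospectral E u v ∧
        ∃ p : Polynomial ℝ, (aeval (X.adjMatrix ℝ) p) *ᵥ eVec u = eVec v) ↔
      StronglyCospectral E u v) ∧
    (Cospectral E u v →
      ∀ p : Polynomial ℝ, (aeval (X.adjMatrix ℝ) p) *ᵥ eVec u = eVec v →
        (aeval (X.adjMatrix ℝ) p) *ᵥ eVec v = eVec u ∧
        ∀ r ∈ suppIdx E u, p.eval (θ r) = 1 ∨ p.eval (θ r) = -1) :=
  ⟨⟨fun ⟨hco, _, hp⟩ => hspec.stronglyCospectral_of_aeval hp hco,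
      fun hsc => ⟨hspec.cospectral_of_stronglyCospectral hsc,
        hspec.exists_aeval_mulVec_eVec_of_stronglyCospectral hsc⟩⟩,
    fun hco _ hp => ⟨hspec.aeval_mulVec_eVec_symm hp hco,
      fun _ hr => hspec.eval_eq_one_or_neg_one hp hco hr⟩⟩

/-- `u, v` are cospectral with a polynomial `p(A) e_u = e_v` iff they are
strongly cospectral; moreover if they are cospectral, any such `p` satisfies
`p(A) e_v = e_u` and `p(θ_r) = ±1` on `Φ_u`. -/
theorem stmt_5 (X : SimpleGraph V) [DecidableRel X.Adj] (hconn : X.Connected)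
    {d : ℕ} (θ : Fin (d + 1) → ℝ) (E : Fin (d + 1) → Matrix V V ℝ)
    (hspec : SpectralDecomp X d θ E) (u v : V) :
    ((Cospectral E u v ∧
        ∃ p : Polynomial ℝ, (aeval (X.adjMatrix ℝ) p) *ᵥ eVec u = eVec v) ↔
      StronglyCospectral E u v) ∧
    (Cospectral E u v →
      ∀ p : Polynomial ℝ, (aeval (X.adjMatrix ℝ) p) *ᵥ eVec u = eVec v →
        (aeval (X.adjMatrix ℝ) p) *ᵥ eVec v = eVec u ∧
        ∀ r ∈ suppIdx E u, p.eval (θ r) = 1 ∨ p.eval (θ r) = -1) :=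
  stmt_5_general X θ E hspec u v
end

section
/- Suppose X is 2-connected, u is a spectrally extremal vertex of X, and u and v are strongly cospectral with u ≠ v. Then d(u,v) = ε_u, i.e., u and v are at maximal distance from each other. -/
/-!
Interpolating the signs `E r e_v = ± E r e_u` over the eigenvalue support `Φ_u` gives a real
polynomial `p` of degree at most `|Φ_u| - 1 = ε_u` with `p(A) e_u = e_v`. Since `(A^k)_{wu}`
counts walks, it vanishes for `k < d(u,w)` and is positive for `k = d(u,w)`; hence
`d(u,v) ≤ deg p` and `v` is the only vertex at distance `deg p` from `u`. If `deg p < ε_u`, a path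
from `u` to an eccentric vertex in `X - v` (which is connected) would cross that distance layer
at a vertex other than `v`. So `deg p = ε_u`, and the eccentric vertex is `v`.
-/
open Matrix Finset Polynomial

variable {V : Type*}

variable [Fintype V] [DecidableEq V]

theorem Matrix.aeval_mulVec_of_mulVec_eq_smul {n R : Type*} [Fintype n] [DecidableEq n]
    [CommRing R] {A : Matrix n n R} {x : n → R} {c : R} (h : A *ᵥ x = c • x) (p : R[X]) :
    aeval A p *ᵥ x = p.eval c • x := by
  have := Module.End.aeval_apply_of_mem_apply_eq_smul (f := Matrix.toLinAlgEquiv' A) (p := p)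
    (by simpa using h)
  rwa [aeval_algHom_apply, Matrix.toLinAlgEquiv'_apply] at this

namespace SpectralDecomp

variable {X : SimpleGraph V} [DecidableRel X.Adj] {d : ℕ}
  {θ : Fin (d + 1) → ℝ} {E : Fin (d + 1) → Matrix V V ℝ}

theorem sum_proj_mulVec (hspec : SpectralDecomp X d θ E) (x : V → ℝ) :
    ∑ r, E r *ᵥ x = x := by
  rw [← Matrix.sum_mulVec, hspec.sum_eq_one, Matrix.one_mulVec]

theorem adjMatrix_mul_proj (hspec : SpectralDecomp X d θ E) (r : Fin (d + 1)) :
    X.adjMatrix ℝ * E r = θ r • E r := by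
  simp [hspec.decomp, Finset.sum_mul, hspec.orth]

theorem aeval_adjMatrix_mulVec (hspec : SpectralDecomp X d θ E) (p : ℝ[X]) (x : V → ℝ) :
    aeval (X.adjMatrix ℝ) p *ᵥ x = ∑ r, p.eval (θ r) • (E r *ᵥ x) := by
  conv_lhs => rw [← hspec.sum_proj_mulVec x, Matrix.mulVec_sum]
  refine Finset.sum_congr rfl fun r _ => Matrix.aeval_mulVec_of_mulVec_eq_smul ?_ p
  rw [Matrix.mulVec_mulVec, hspec.adjMatrix_mul_proj, Matrix.smul_mulVec]

theorem exists_aeval_mulVec_eVec_eq (hspec : SpectralDecomp X d θ E) {u v : V}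
    (hsc : StronglyCospectral E u v) :
    ∃ p : ℝ[X], p.natDegree ≤ dualDeg E u ∧ aeval (X.adjMatrix ℝ) p *ᵥ eVec u = eVec v := by
  classical
  have hsign : ∀ r, ∃ s : ℝ, E r *ᵥ eVec v = s • (E r *ᵥ eVec u) := fun r =>
    (hsc r).elim (fun h => ⟨1, by rw [h, one_smul]⟩) (fun h => ⟨-1, by rw [h, neg_one_smul]⟩)
  choose σ hσ using hsign
  have hinj : Set.InjOn θ (suppIdx E u) := (StrictAnti.injective hspec.strict_anti).injOn
  refine ⟨Lagrange.interpolate (suppIdx E u) θ σ,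
    natDegree_le_iff_degree_le.mpr (Lagrange.degree_interpolate_le σ hinj), ?_⟩
  rw [hspec.aeval_adjMatrix_mulVec, ← hspec.sum_proj_mulVec (eVec v)]
  refine Finset.sum_congr rfl fun r _ => ?_
  by_cases hr : r ∈ suppIdx E u
  · rw [Lagrange.eval_interpolate_at_node σ hinj hr, hσ]
  · have hzero : E r *ᵥ eVec u = 0 := by simpa [suppIdx] using hr
    rw [hσ, hzero, smul_zero, smul_zero]

end SpectralDecomp

namespace SimpleGraph

section Walks

variable {W : Type*} {G : SimpleGraph W}

theorem Walk.exists_mem_support_dist_eq (hconn : G.Connected) (u : W) {m : ℕ} :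
    ∀ {a b : W} (p : G.Walk a b), G.dist u a ≤ m → m ≤ G.dist u b →
      ∃ w ∈ p.support, G.dist u w = m
  | _, _, .nil, ha, hb => ⟨_, Walk.start_mem_support _, le_antisymm ha hb⟩
  | a, _, .cons (v := c) hadj q, ha, hb => by
    by_cases hc : G.dist u c ≤ m
    · obtain ⟨w, hw, hwm⟩ := exists_mem_support_dist_eq hconn u q hc hb
      exact ⟨w, List.mem_cons_of_mem _ hw, hwm⟩
    · have htri := hconn.dist_triangle (u := u) (v := a) (w := c)
      rw [dist_eq_one_iff_adj.mpr hadj] at htri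
      exact ⟨a, Walk.start_mem_support _, by omega⟩

end Walks

section Eccentricity

variable {W : Type*} [Fintype W] {G : SimpleGraph W}

variable (G) in
theorem exists_dist_eq_ecc (u : W) : ∃ z, G.dist u z = ecc G u := by
  obtain ⟨z, -, hz⟩ := Finset.exists_mem_eq_sup Finset.univ ⟨u, Finset.mem_univ u⟩
    (fun w => G.dist u w)
  exact ⟨z, hz.symm⟩

theorem ecc_le_of_forall_dist_eq_imp_eq (hconn : G.Connected)
    {u v : W} (hv : (G.induce {z | z ≠ v}).Connected) (huv : u ≠ v) {m : ℕ}
    (hvm : G.dist u v ≤ m) (hm : ∀ w, G.dist u w = m → w = v) : ecc G u ≤ m := by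
  by_contra! hlt
  obtain ⟨z, hz⟩ := exists_dist_eq_ecc G u
  have hzv : z ≠ v := by rintro rfl; omega
  obtain ⟨p⟩ := hv.preconnected ⟨u, huv⟩ ⟨z, hzv⟩
  obtain ⟨w, hw, hwm⟩ := Walk.exists_mem_support_dist_eq hconn u
    (p.map (Embedding.induce {z | z ≠ v}).toHom) (by simp) (show m ≤ G.dist u z by omega)
  rw [Walk.support_map, List.mem_map] at hw
  obtain ⟨w', -, rfl⟩ := hw
  exact w'.2 (hm _ hwm)

end Eccentricity

section AdjacencyPolynomials

variable {G : SimpleGraph V} [DecidableRel G.Adj] {u v w : V}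

theorem adjMatrix_pow_apply_eq_zero_of_lt_dist {α : Type*} [Semiring α] {k : ℕ}
    (h : k < G.dist u w) : (G.adjMatrix α ^ k) u w = 0 := by
  have hempty : IsEmpty {p : G.Walk u w | p.length = k} :=
    ⟨fun ⟨p, hp⟩ => absurd (hp ▸ dist_le p) (not_le.mpr h)⟩
  rw [adjMatrix_pow_apply_eq_card_walk, Fintype.card_eq_zero, Nat.cast_zero]

theorem Reachable.adjMatrix_pow_dist_apply_ne_zero {α : Type*} [Semiring α] [CharZero α]
    (h : G.Reachable u w) : (G.adjMatrix α ^ G.dist u w) u w ≠ 0 := by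
  rw [adjMatrix_pow_apply_eq_card_walk, Nat.cast_ne_zero, ← Nat.pos_iff_ne_zero,
    Fintype.card_pos_iff]
  obtain ⟨p, hp⟩ := h.exists_walk_length_eq_dist
  exact ⟨⟨p, hp⟩⟩

theorem aeval_adjMatrix_apply {R : Type*} [CommSemiring R] (p : R[X]) (u w : V) :
    aeval (G.adjMatrix R) p u w =
      ∑ k ∈ range (p.natDegree + 1), p.coeff k * (G.adjMatrix R ^ k) u w := by
  simp [aeval_eq_sum_range, Matrix.sum_apply]

theorem aeval_adjMatrix_apply_eq_zero_of_natDegree_lt_dist {R : Type*} [CommSemiring R]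
    {p : R[X]} (h : p.natDegree < G.dist u w) : aeval (G.adjMatrix R) p u w = 0 := by
  rw [aeval_adjMatrix_apply]
  refine Finset.sum_eq_zero fun k hk => ?_
  rw [adjMatrix_pow_apply_eq_zero_of_lt_dist (by rw [mem_range] at hk; omega), mul_zero]

theorem Reachable.aeval_adjMatrix_apply_ne_zero_of_dist_eq_natDegree {R : Type*} [CommRing R]
    [IsDomain R] [CharZero R] {p : R[X]} (hr : G.Reachable u w) (hp : p ≠ 0)
    (h : G.dist u w = p.natDegree) : aeval (G.adjMatrix R) p u w ≠ 0 := by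
  rw [aeval_adjMatrix_apply, sum_range_succ, Finset.sum_eq_zero fun k hk => by
    rw [adjMatrix_pow_apply_eq_zero_of_lt_dist (by rw [mem_range] at hk; omega), mul_zero],
    zero_add, ← h]
  exact mul_ne_zero (h ▸ leadingCoeff_ne_zero.mpr hp) hr.adjMatrix_pow_dist_apply_ne_zero

theorem dist_le_natDegree_of_aeval_mulVec_eVec_eq {p : ℝ[X]}
    (hp : aeval (G.adjMatrix ℝ) p *ᵥ eVec u = eVec v) : G.dist u v ≤ p.natDegree := by
  by_contra! hlt
  have hvu := congrFun hp v
  rw [dist_comm] at hlt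
  simp [eVec, aeval_adjMatrix_apply_eq_zero_of_natDegree_lt_dist hlt] at hvu

theorem eq_of_dist_eq_natDegree_of_aeval_mulVec_eVec_eq (hconn : G.Connected) {p : ℝ[X]}
    (hp : aeval (G.adjMatrix ℝ) p *ᵥ eVec u = eVec v) (hw : G.dist u w = p.natDegree) :
    w = v := by
  by_contra hwv
  have hp0 : p ≠ 0 := by
    rintro rfl
    simpa [eVec] using congrFun hp v
  have hwu := congrFun hp w
  rw [dist_comm] at hw
  simp [eVec, hwv] at hwu
  exact (hconn w u).aeval_adjMatrix_apply_ne_zero_of_dist_eq_natDegree hp0 hw hwu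

end AdjacencyPolynomials

end SimpleGraph

theorem stmt_9_general (X : SimpleGraph V) [DecidableRel X.Adj] (hconn : X.Connected)
    {d : ℕ} (θ : Fin (d + 1) → ℝ) (E : Fin (d + 1) → Matrix V V ℝ)
    (hspec : SpectralDecomp X d θ E) (u v : V)
    (h2conn : ∀ w : V, (X.induce {z : V | z ≠ w}).Connected)
    (hext : SpectrallyExtremal X E u) (hsc : StronglyCospectral E u v) (hne : u ≠ v) :
    X.dist u v = ecc X u := by
  obtain ⟨p, hdeg, hp⟩ := hspec.exists_aeval_mulVec_eVec_eq hsc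
  have hdeg_le : p.natDegree ≤ ecc X u := hext ▸ hdeg
  have hvp : X.dist u v ≤ p.natDegree := X.dist_le_natDegree_of_aeval_mulVec_eVec_eq hp
  have hunique : ∀ w, X.dist u w = p.natDegree → w = v := fun w hw =>
    X.eq_of_dist_eq_natDegree_of_aeval_mulVec_eVec_eq hconn hp hw
  have hecc : ecc X u ≤ p.natDegree :=
    X.ecc_le_of_forall_dist_eq_imp_eq hconn (h2conn v) hne hvp hunique
  obtain ⟨z, hz⟩ := X.exists_dist_eq_ecc u
  obtain rfl : z = v := hunique z (by omega)
  exact hz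

/-- In a 2-connected graph, a spectrally extremal vertex `u` and a vertex
`v ≠ u` strongly cospectral to it are at maximal distance: `d(u,v) = ε_u`. -/
theorem stmt_9 (X : SimpleGraph V) [DecidableRel X.Adj] (hconn : X.Connected)
    {d : ℕ} (θ : Fin (d + 1) → ℝ) (E : Fin (d + 1) → Matrix V V ℝ)
    (hspec : SpectralDecomp X d θ E) (u v : V)
    (hcard : 3 ≤ Fintype.card V)
    (h2conn : ∀ w : V, (X.induce {z : V | z ≠ w}).Connected)
    (hext : SpectrallyExtremal X E u) (hsc : StronglyCospectral E u v) (hne : u ≠ v) :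
    X.dist u v = ecc X u :=
  stmt_9_general X hconn θ E hspec u v h2conn hext hsc hne
end
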